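/- With Q = Y X^T (X X^T)^{-1/2} = ∑_{i=1}^q σ_i u_i v_i^T and W = ∑_{j∈J} σ_j u_j v_j^T (X X^T)^{-1/2} for J ⊆ {1,...,q}, one has L^1(W) = (1/2)(tr(Y Y^T) - ∑_{j∈J} σ_j^2), where L^1(W) = (1/2)‖Y - W X‖_F^2. -/
import Mathlib


open Matrix

/-- The principal real power of a positive semidefinite (here: Hermitian) real matrix,
defined through its spectral decomposition: A^r = U diag(λᵢ^r) Uᵀ. -/
noncomputable def psdRpow {n : ℕ} {A : Matrix (Fin n) (Fin n) ℝ} (hA : A.IsHermitian) (r : ℝ) :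
    Matrix (Fin n) (Fin n) ℝ :=
  (hA.eigenvectorUnitary : Matrix (Fin n) (Fin n) ℝ) *
    Matrix.diagonal (fun i => (hA.eigenvalues i) ^ r) *
    (star (hA.eigenvectorUnitary : Matrix (Fin n) (Fin n) ℝ))

/-- The loss L¹(W) = (1/2)‖Y - W X‖_F² written via the trace. -/
noncomputable def L1 {dx dy m : ℕ} (X : Matrix (Fin dx) (Fin m) ℝ)
    (Y : Matrix (Fin dy) (Fin m) ℝ) (W : Matrix (Fin dy) (Fin dx) ℝ) : ℝ :=
  (1 / 2) * Matrix.trace ((Y - W * X) * (Y - W * X)ᵀ)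

lemma psdRpow_transpose {n : ℕ} {A : Matrix (Fin n) (Fin n) ℝ} (hA : A.IsHermitian) (r : ℝ) :
    (psdRpow hA r)ᵀ = psdRpow hA r := by
  unfold psdRpow
  rw [star_eq_conjTranspose, conjTranspose_eq_transpose_of_trivial]
  simp [Matrix.transpose_mul, Matrix.diagonal_transpose, Matrix.mul_assoc]

lemma psdRpow_mul_self_mul {n : ℕ} {A : Matrix (Fin n) (Fin n) ℝ} (hA : A.PosDef) :
    psdRpow hA.1 (-(1/2)) * A * psdRpow hA.1 (-(1/2)) = 1 := by
  set U : Matrix (Fin n) (Fin n) ℝ := (hA.1.eigenvectorUnitary : Matrix (Fin n) (Fin n) ℝ)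
  have hsU : star U * U = 1 := Matrix.UnitaryGroup.star_mul_self hA.1.eigenvectorUnitary
  have hUs : U * star U = 1 := Matrix.mem_unitaryGroup_iff.mp (hA.1.eigenvectorUnitary).2
  have hspec : A = U * Matrix.diagonal (fun i => hA.1.eigenvalues i) * star U := by
    have := hA.1.spectral_theorem
    simpa [Function.comp] using this
  have key : ∀ i, (hA.1.eigenvalues i) ^ (-(1/2):ℝ) * hA.1.eigenvalues i *
      (hA.1.eigenvalues i) ^ (-(1/2):ℝ) = 1 := by
    intro i
    have hpos := hA.eigenvalues_pos i
    have h2 : (hA.1.eigenvalues i) ^ (-(1/2):ℝ) * (hA.1.eigenvalues i) ^ (-(1/2):ℝ)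
        = (hA.1.eigenvalues i)⁻¹ := by
      rw [← Real.rpow_add hpos]
      norm_num [Real.rpow_neg_one]
    calc (hA.1.eigenvalues i) ^ (-(1/2):ℝ) * hA.1.eigenvalues i *
        (hA.1.eigenvalues i) ^ (-(1/2):ℝ)
        = hA.1.eigenvalues i * ((hA.1.eigenvalues i) ^ (-(1/2):ℝ) *
          (hA.1.eigenvalues i) ^ (-(1/2):ℝ)) := by ring
      _ = 1 := by rw [h2, mul_inv_cancel₀ hpos.ne']
  have step : psdRpow hA.1 (-(1/2)) * A * psdRpow hA.1 (-(1/2)) =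
      (U * Matrix.diagonal (fun i => (hA.1.eigenvalues i) ^ (-(1/2):ℝ)) * star U) *
        (U * Matrix.diagonal (fun i => hA.1.eigenvalues i) * star U) *
        (U * Matrix.diagonal (fun i => (hA.1.eigenvalues i) ^ (-(1/2):ℝ)) * star U) := by
    rw [← hspec]; rfl
  rw [step]
  calc (U * Matrix.diagonal (fun i => (hA.1.eigenvalues i) ^ (-(1/2):ℝ)) * star U) *
        (U * Matrix.diagonal (fun i => hA.1.eigenvalues i) * star U) *
        (U * Matrix.diagonal (fun i => (hA.1.eigenvalues i) ^ (-(1/2):ℝ)) * star U)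
      = U * (Matrix.diagonal (fun i => (hA.1.eigenvalues i) ^ (-(1/2):ℝ)) *
          Matrix.diagonal (fun i => hA.1.eigenvalues i) *
          Matrix.diagonal (fun i => (hA.1.eigenvalues i) ^ (-(1/2):ℝ))) * star U := by
        simp only [Matrix.mul_assoc]
        rw [← Matrix.mul_assoc (star U) U, hsU, Matrix.one_mul,
          ← Matrix.mul_assoc (star U) U, hsU, Matrix.one_mul]
    _ = U * star U := by
        rw [Matrix.diagonal_mul_diagonal, Matrix.diagonal_mul_diagonal]
        simp only [key]
        simp
    _ = 1 := hUs

lemma trace_vecMulVec' {n : ℕ} (a b : Fin n → ℝ) :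
    Matrix.trace (Matrix.vecMulVec a b) = a ⬝ᵥ b := by
  simp [Matrix.trace, Matrix.vecMulVec_apply, Matrix.diag, dotProduct]

lemma vecMulVec_transpose' {n m : ℕ} (a : Fin n → ℝ) (b : Fin m → ℝ) :
    (Matrix.vecMulVec a b)ᵀ = Matrix.vecMulVec b a := by
  ext i j; simp [Matrix.vecMulVec_apply, mul_comm]

lemma vecMulVec_mul_vecMulVec' {n m k : ℕ} (a : Fin n → ℝ) (b : Fin m → ℝ)
    (c : Fin m → ℝ) (d : Fin k → ℝ) :
    Matrix.vecMulVec a b * Matrix.vecMulVec c d = (b ⬝ᵥ c) • Matrix.vecMulVec a d := by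
  ext i j
  simp [Matrix.mul_apply, Matrix.vecMulVec_apply, dotProduct, Finset.mul_sum, Finset.sum_mul]
  congr 1; ext l; ring

/-- For W = ∑_{j∈J} σ_j u_j v_jᵀ (X Xᵀ)^{-1/2}, one has
L¹(W) = (1/2)(tr(Y Yᵀ) - ∑_{j∈J} σ_j²). -/
theorem stmt13 {dx dy m q : ℕ}
    (X : Matrix (Fin dx) (Fin m) ℝ) (Y : Matrix (Fin dy) (Fin m) ℝ)
    (hX : (X * Xᵀ).PosDef)
    (σ : Fin q → ℝ) (u : Fin q → Fin dy → ℝ) (v : Fin q → Fin dx → ℝ)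
    (hσpos : ∀ i, 0 < σ i) (hσmono : Antitone σ)
    (hu : ∀ i j, u i ⬝ᵥ u j = if i = j then (1 : ℝ) else 0)
    (hv : ∀ i j, v i ⬝ᵥ v j = if i = j then (1 : ℝ) else 0)
    (hQ : Y * Xᵀ * psdRpow hX.1 (-(1 / 2)) =
      ∑ i : Fin q, σ i • Matrix.vecMulVec (u i) (v i))
    (J : Finset (Fin q))
    (W : Matrix (Fin dy) (Fin dx) ℝ)
    (hW : W = (∑ j ∈ J, σ j • Matrix.vecMulVec (u j) (v j)) * psdRpow hX.1 (-(1 / 2))) :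
    L1 X Y W = (1 / 2) * (Matrix.trace (Y * Yᵀ) - ∑ j ∈ J, (σ j) ^ 2) := by
  set S := psdRpow hX.1 (-(1/2)) with hS
  set P : Matrix (Fin dy) (Fin dx) ℝ := ∑ j ∈ J, σ j • Matrix.vecMulVec (u j) (v j) with hP
  set Q : Matrix (Fin dy) (Fin dx) ℝ := ∑ i : Fin q, σ i • Matrix.vecMulVec (u i) (v i) with hQdef
  have hSt : Sᵀ = S := psdRpow_transpose hX.1 _
  have hSAS : S * (X * Xᵀ) * S = 1 := psdRpow_mul_self_mul hX
  have key : ∀ (K : Finset (Fin q)), J ⊆ K →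
      Matrix.trace ((∑ j ∈ J, σ j • Matrix.vecMulVec (u j) (v j)) *
        (∑ i ∈ K, σ i • Matrix.vecMulVec (u i) (v i))ᵀ) = ∑ j ∈ J, (σ j)^2 := by
    intro K hJK
    rw [Matrix.transpose_sum, Matrix.sum_mul, Matrix.trace_sum]
    refine Finset.sum_congr rfl fun j hj => ?_
    rw [Matrix.mul_sum, Matrix.trace_sum, Finset.sum_eq_single_of_mem j (hJK hj)]
    · simp [Matrix.transpose_smul, vecMulVec_transpose', Matrix.smul_mul, Matrix.mul_smul,
        vecMulVec_mul_vecMulVec', trace_vecMulVec', hv, hu, pow_two]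
    · intro i hi hij
      simp [Matrix.transpose_smul, vecMulVec_transpose', Matrix.smul_mul, Matrix.mul_smul,
        vecMulVec_mul_vecMulVec', trace_vecMulVec', hv, hu, hij, Ne.symm hij]
  have hPQ : Matrix.trace (P * Qᵀ) = ∑ j ∈ J, (σ j)^2 := by
    rw [hP, hQdef]; exact key Finset.univ (Finset.subset_univ J)
  have hPP : Matrix.trace (P * Pᵀ) = ∑ j ∈ J, (σ j)^2 := by
    rw [hP]; exact key J (Finset.Subset.refl J)
  have hWt : Wᵀ = S * Pᵀ := by rw [hW, Matrix.transpose_mul, hSt]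
  have h1 : Matrix.trace (W * (X * Xᵀ) * Wᵀ) = ∑ j ∈ J, (σ j)^2 := by
    rw [hWt, hW]
    have : P * S * (X * Xᵀ) * (S * Pᵀ) = P * (S * (X * Xᵀ) * S) * Pᵀ := by
      simp only [Matrix.mul_assoc]
    rw [this, hSAS, Matrix.mul_one, hPP]
  have h2 : Matrix.trace (Y * Xᵀ * Wᵀ) = ∑ j ∈ J, (σ j)^2 := by
    rw [hWt, ← Matrix.mul_assoc]
    have : Y * Xᵀ * S * Pᵀ = Q * Pᵀ := by rw [← hQ]
    rw [this]
    rw [← hPQ, ← Matrix.trace_transpose, Matrix.transpose_mul, Matrix.transpose_transpose,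
      Matrix.trace_mul_comm]
  have h3 : Matrix.trace (W * X * Yᵀ) = ∑ j ∈ J, (σ j)^2 := by
    rw [← Matrix.trace_transpose, Matrix.transpose_mul, Matrix.transpose_mul,
      Matrix.transpose_transpose, ← Matrix.mul_assoc]
    exact h2
  unfold L1
  have expand : (Y - W * X) * (Y - W * X)ᵀ =
      Y * Yᵀ - Y * (Xᵀ * Wᵀ) - (W * X) * Yᵀ + W * X * (Xᵀ * Wᵀ) := by
    rw [Matrix.transpose_sub, Matrix.transpose_mul]
    rw [Matrix.sub_mul, Matrix.mul_sub, Matrix.mul_sub]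
    abel
  rw [expand]
  rw [Matrix.trace_add, Matrix.trace_sub, Matrix.trace_sub]
  have e1 : Y * (Xᵀ * Wᵀ) = Y * Xᵀ * Wᵀ := by rw [Matrix.mul_assoc]
  have e2 : W * X * (Xᵀ * Wᵀ) = W * (X * Xᵀ) * Wᵀ := by simp only [Matrix.mul_assoc]
  rw [e1, e2, h1, h2, h3]
  ring
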